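/- arXiv:1801.04030 — 3 statements merged into one kernel-verified Lean document; each statement's English description precedes it below -/
import Mathlib

section
/- Let m ≤ n be natural numbers and let s : (Z/9)^n → (Z/9)^m be a surjective group homomorphism. Then there exists a basis change of (Z/9)^m (an automorphism of (Z/9)^m) and a permutation of the coordinates of (Z/9)^n such that, with respect to the new bases, s is represented by a matrix of block form [I_m | A] where I_m is the m×m identity matrix over Z/9 and A is an arbitrary m×(n−m) matrix over Z/9. -/
/-! `ZMod 9` is a local ring, being a quotient of `ℤ_[3]`. Over a local ring the images under `s`
of the standard basis vectors span the free module `(ZMod 9)^m`, so by Nakayama's lemma some `m`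
of them form a basis. Permuting the source coordinates so that these come first and taking
coordinates in that basis puts `s` in the form `[I_m | A]`. -/

open Function Module

theorem ZMod.isLocalRing_prime_pow (p : ℕ) [hp : Fact p.Prime] {k : ℕ} (hk : k ≠ 0) :
    IsLocalRing (ZMod (p ^ k)) :=
  haveI : Fact (1 < p ^ k) := ⟨Nat.one_lt_pow hk hp.out.one_lt⟩
  IsLocalRing.of_surjective' (PadicInt.toZModPow k) (ZMod.ringHom_surjective _)

instance : IsLocalRing (ZMod 9) :=
  haveI : Fact (Nat.Prime 3) := ⟨by norm_num⟩
  ZMod.isLocalRing_prime_pow 3 (k := 2) two_ne_zero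

theorem Fin.exists_perm_eq_of_injective {m n : ℕ} {a : Fin m → Fin n} (ha : Injective a) :
    ∃ π : Equiv.Perm (Fin n), ∀ (j : Fin n) (hj : (j : ℕ) < m), π j = a ⟨j, hj⟩ := by
  have hmn := Fin.le_of_injective a ha
  let e : {j : Fin n // (j : ℕ) < m} ≃ Set.range a :=
    Equiv.ofBijective (fun j ↦ ⟨a ⟨j, j.2⟩, Set.mem_range_self _⟩)
      ⟨fun j k h ↦ Subtype.ext (Fin.ext (by simpa using ha (Subtype.ext_iff.mp h))),
        by rintro ⟨_, i, rfl⟩; exact ⟨⟨Fin.castLE hmn i, i.2⟩, rfl⟩⟩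
  exact ⟨e.extendSubtype, fun j hj ↦ by rw [e.extendSubtype_apply_of_mem j hj]; rfl⟩

theorem Module.exists_basis_fin_of_span_of_flat {R M ι : Type*} [CommRing R] [IsLocalRing R]
    [AddCommGroup M] [Module R M] [FinitePresentation R M] [Flat R M] {m : ℕ}
    (hm : finrank R M = m) {v : ι → M} (hv : Submodule.span R (Set.range v) = ⊤) :
    ∃ (a : Fin m → ι) (b : Basis (Fin m) R M), ∀ i, b i = v (a i) := by
  obtain ⟨κ, a, b, hb⟩ := exists_basis_of_span_of_flat v hv
  have := Module.Finite.finite_basis b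
  have : Fintype κ := Fintype.ofFinite κ
  let e : κ ≃ Fin m := Fintype.equivFinOfCardEq (hm ▸ (finrank_eq_card_basis b).symm)
  exact ⟨a ∘ e.symm, b.reindex e, fun i ↦ by simp [hb]⟩

theorem LinearMap.exists_basis_perm_of_surjective {R : Type*} [CommRing R] [IsLocalRing R]
    {m n : ℕ} (f : (Fin n → R) →ₗ[R] (Fin m → R)) (hf : Surjective f) :
    ∃ (b : Basis (Fin m) R (Fin m → R)) (π : Equiv.Perm (Fin n)),
      ∀ (j : Fin n) (hj : (j : ℕ) < m), f (Pi.single (π j) 1) = b ⟨j, hj⟩ := by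
  have hspan : Submodule.span R (Set.range fun j ↦ f (Pi.single j 1)) = ⊤ := by
    have hcomp : (fun j ↦ f (Pi.single j 1)) = f ∘ Pi.basisFun R (Fin n) := by
      ext1 j; simp
    rw [hcomp, Set.range_comp, ← Submodule.map_span, Basis.span_eq, Submodule.map_top,
      LinearMap.range_eq_top.mpr hf]
  obtain ⟨a, b, hb⟩ := exists_basis_fin_of_span_of_flat (finrank_fin_fun R) hspan
  have hba : (fun j ↦ f (Pi.single j 1)) ∘ a = b := funext fun i ↦ (hb i).symm
  obtain ⟨π, hπ⟩ := Fin.exists_perm_eq_of_injective (hba ▸ b.injective).of_comp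
  exact ⟨b, π, fun j hj ↦ by rw [hπ j hj, hb]⟩

theorem stmt_8_general (m n : ℕ)
    (s : (Fin n → ZMod 9) →+ (Fin m → ZMod 9)) (hs : Function.Surjective s) :
    ∃ (e : (Fin m → ZMod 9) ≃+ (Fin m → ZMod 9)) (π : Equiv.Perm (Fin n))
      (A : Matrix (Fin m) (Fin n) (ZMod 9)),
      (∀ (i : Fin m) (j : Fin n), (j : ℕ) < m → A i j = if (j : ℕ) = (i : ℕ) then 1 else 0) ∧
      ∀ (x : Fin n → ZMod 9) (i : Fin m), e (s x) i = ∑ j : Fin n, A i j * x (π j) := by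
  let f := s.toZModLinearMap 9
  obtain ⟨b, π, hπ⟩ := f.exists_basis_perm_of_surjective hs
  let g := b.equivFun.toLinearMap ∘ₗ f
  refine ⟨b.equivFun.toAddEquiv, π, .of fun i j ↦ g (Pi.single (π j) 1) i, fun i j hj ↦ ?_,
    fun x i ↦ ?_⟩
  · simp [g, hπ j hj, Finsupp.single_apply, Fin.ext_iff, eq_comm]
  · calc b.equivFun (s x) i = g x i := rfl
      _ = ∑ l, g (Pi.single l 1) i * x l := by
        simpa [Matrix.mulVec, dotProduct, LinearMap.toMatrix'_apply] using
          (congrFun (LinearMap.toMatrix'_mulVec g x) i).symm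
      _ = _ := (Equiv.sum_comp π fun l ↦ g (Pi.single l 1) i * x l).symm

/-- A surjective homomorphism `(ℤ/9)^n → (ℤ/9)^m` (with `m ≤ n`) can, after a change of
basis of the target and a permutation of the coordinates of the source, be represented
by a matrix of block form `[I_m | A]`. -/
theorem stmt_8 (m n : ℕ) (hmn : m ≤ n)
    (s : (Fin n → ZMod 9) →+ (Fin m → ZMod 9)) (hs : Function.Surjective s) :
    ∃ (e : (Fin m → ZMod 9) ≃+ (Fin m → ZMod 9)) (π : Equiv.Perm (Fin n))
      (A : Matrix (Fin m) (Fin n) (ZMod 9)),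
      (∀ (i : Fin m) (j : Fin n), (j : ℕ) < m → A i j = if (j : ℕ) = (i : ℕ) then 1 else 0) ∧
      ∀ (x : Fin n → ZMod 9) (i : Fin m), e (s x) i = ∑ j : Fin n, A i j * x (π j) :=
  stmt_8_general m n s hs
end

section
/- Let σ : Z/9 → Q be the function with σ(0)=0, σ(1)=5/9, σ(2)=11/9, σ(3)=1, σ(4)=−1/9, σ(5)=−1/9, σ(6)=1, σ(7)=11/9, σ(8)=5/9. Let m ≤ n and let a^i_j ∈ Z/9 for m+1 ≤ i ≤ n, 1 ≤ j ≤ m. Then either m·σ(2) + Σ_{i=m+1}^n σ(2·(a^i_1+...+a^i_m)) ≥ (10/9)·m, or m·σ(6) + Σ_{i=m+1}^n σ(6·(a^i_1+...+a^i_m)) ≥ (10/9)·m. -/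
/-!
Write `bᵢ = Σⱼ aᵢⱼ` and let `k` count the indices with `2 bᵢ ∈ {4, 5}`. As `-1/9` is the only
negative value of `σ`, taken exactly on `{4, 5}`, the first sum is at least `(11/9) m - k/9`.
As `6 bᵢ = 3 · 2 bᵢ` is a multiple of `3`, `σ(6 bᵢ) ∈ {0, 1}`, and it is `1` whenever `2 bᵢ ∈ {4, 5}`;
so the second sum is at least `m + k`. The first bound suffices when `k ≤ m`, the second when
`m ≤ k`.
-/

open Finset

/-- The Casson–Gordon signature table of `L(9,4)`. -/
noncomputable def sigmaCG (a : ZMod 9) : ℚ :=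
  ![0, 5/9, 11/9, 1, -1/9, -1/9, 1, 11/9, 5/9] ⟨a.val, a.val_lt⟩

lemma sigmaCG_two : sigmaCG 2 = 11 / 9 := rfl

lemma sigmaCG_six : sigmaCG 6 = 1 := rfl

-- `decide +kernel`: the elaborator's `decide` gets stuck evaluating the fractions.
lemma neg_ninth_mul_ite_le_sigmaCG (y : ZMod 9) :
    -(1 / 9) * (if y = 4 ∨ y = 5 then 1 else 0 : ℚ) ≤ sigmaCG y := by
  revert y; decide +kernel

lemma ite_le_sigmaCG_six_mul (y : ZMod 9) :
    (if 2 * y = 4 ∨ 2 * y = 5 then 1 else 0 : ℚ) ≤ sigmaCG (6 * y) := by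
  revert y; decide

section

variable {ι : Type*} [Fintype ι] (b : ι → ZMod 9)

def cardTwoMulEqFourOrFive : ℕ := #{i | 2 * b i = 4 ∨ 2 * b i = 5}

lemma neg_cardTwoMulEqFourOrFive_div_nine_le_sum_sigmaCG_two_mul :
    -(cardTwoMulEqFourOrFive b : ℚ) / 9 ≤ ∑ i, sigmaCG (2 * b i) := calc
  -(cardTwoMulEqFourOrFive b : ℚ) / 9
      = ∑ i, -(1 / 9) * (if 2 * b i = 4 ∨ 2 * b i = 5 then 1 else 0 : ℚ) := by
    rw [← mul_sum, sum_boole, cardTwoMulEqFourOrFive]; ring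
  _ ≤ ∑ i, sigmaCG (2 * b i) := sum_le_sum fun i _ => neg_ninth_mul_ite_le_sigmaCG _

lemma cardTwoMulEqFourOrFive_le_sum_sigmaCG_six_mul :
    (cardTwoMulEqFourOrFive b : ℚ) ≤ ∑ i, sigmaCG (6 * b i) := by
  rw [cardTwoMulEqFourOrFive, ← sum_boole]
  exact sum_le_sum fun i _ => ite_le_sigmaCG_six_mul (b i)

end

theorem stmt_10_general (m n : ℕ) (a : Fin (n - m) → Fin m → ZMod 9) :
    (10 / 9 : ℚ) * m ≤ (m : ℚ) * sigmaCG 2 + ∑ i, sigmaCG (2 * ∑ j, a i j) ∨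
      (10 / 9 : ℚ) * m ≤ (m : ℚ) * sigmaCG 6 + ∑ i, sigmaCG (6 * ∑ j, a i j) := by
  set b : Fin (n - m) → ZMod 9 := fun i => ∑ j, a i j
  have h₂ := neg_cardTwoMulEqFourOrFive_div_nine_le_sum_sigmaCG_two_mul b
  have h₆ := cardTwoMulEqFourOrFive_le_sum_sigmaCG_six_mul b
  rw [sigmaCG_two, sigmaCG_six]
  rcases le_total (cardTwoMulEqFourOrFive b : ℚ) m with hk | hk
  · left; linarith
  · right; linarith

/-- For any `a^i_j ∈ ℤ/9` (`m+1 ≤ i ≤ n`, `1 ≤ j ≤ m`), either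
`m·σ(2) + Σ_i σ(2·Σ_j a^i_j) ≥ (10/9)m` or `m·σ(6) + Σ_i σ(6·Σ_j a^i_j) ≥ (10/9)m`. -/
theorem stmt_10 (m n : ℕ) (hmn : m ≤ n) (a : Fin (n - m) → Fin m → ZMod 9) :
    (10 / 9 : ℚ) * m ≤ (m : ℚ) * sigmaCG 2 + ∑ i, sigmaCG (2 * ∑ j, a i j) ∨
      (10 / 9 : ℚ) * m ≤ (m : ℚ) * sigmaCG 6 + ∑ i, sigmaCG (6 * ∑ j, a i j) :=
  stmt_10_general m n a
end

section
/- Let G₁ and G₂ be finite abelian groups, n₁, n₂ natural numbers, and suppose there exist elements a^i_j ∈ G_i ⊕ Z^{2n_i} (i = 1, 2; j = 1, ..., 2(n₁+n₂)) such that (G₁ ⊕ Z^{2n₁})/⟨{a¹_j}⟩ ≅ G₂ and (G₂ ⊕ Z^{2n₂})/⟨{a²_j}⟩ ≅ G₁. Then if G = (G₁ ⊕ Z^{2n₁} ⊕ G₂ ⊕ Z^{2n₂})/⟨{(a¹_j, a²_j)}⟩ is finite, its order satisfies: |G| admits G₁ ⊕ G₂ as a quotient, hence |G₁|·|G₂|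 divides |G|. -/
open AddSubgroup Set

theorem AddSubgroup.closure_range_pair_le_prod {ι M₁ M₂ : Type*} [AddGroup M₁] [AddGroup M₂]
    (a₁ : ι → M₁) (a₂ : ι → M₂) :
    closure (range fun j => (a₁ j, a₂ j)) ≤ (closure (range a₁)).prod (closure (range a₂)) :=
  closure_le _ |>.mpr <| by
    rintro _ ⟨j, rfl⟩
    exact mem_prod.mpr ⟨subset_closure ⟨j, rfl⟩, subset_closure ⟨j, rfl⟩⟩

/-- The quotient by the joint relations `(a₁ j, a₂ j)` maps onto the product of the quotients
by the separate relations; in terms of indices, the closures are nested. -/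
theorem AddSubgroup.card_quotient_mul_card_quotient_dvd_card_quotient_closure_range_pair
    {ι M₁ M₂ : Type*} [AddGroup M₁] [AddGroup M₂] (a₁ : ι → M₁) (a₂ : ι → M₂) :
    Nat.card (M₁ ⧸ closure (range a₁)) * Nat.card (M₂ ⧸ closure (range a₂)) ∣
      Nat.card ((M₁ × M₂) ⧸ closure (range fun j => (a₁ j, a₂ j))) := by
  have := index_dvd_of_le (closure_range_pair_le_prod a₁ a₂)
  rwa [index_prod] at this

theorem stmt_12_general (G₁ G₂ : Type*) [AddCommGroup G₁] [AddCommGroup G₂]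
    (n₁ n₂ : ℕ)
    (a₁ : Fin (2 * (n₁ + n₂)) → G₁ × (Fin (2 * n₁) → ℤ))
    (a₂ : Fin (2 * (n₁ + n₂)) → G₂ × (Fin (2 * n₂) → ℤ))
    (e₁ : ((G₁ × (Fin (2 * n₁) → ℤ)) ⧸ AddSubgroup.closure (Set.range a₁)) ≃+ G₂)
    (e₂ : ((G₂ × (Fin (2 * n₂) → ℤ)) ⧸ AddSubgroup.closure (Set.range a₂)) ≃+ G₁)
    (G : Type*) [AddCommGroup G]
    (e : G ≃+
      ((G₁ × (Fin (2 * n₁) → ℤ)) × (G₂ × (Fin (2 * n₂) → ℤ))) ⧸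
        AddSubgroup.closure (Set.range fun j => (a₁ j, a₂ j))) :
    Nat.card G₁ * Nat.card G₂ ∣ Nat.card G := by
  rw [Nat.card_congr e.toEquiv, ← Nat.card_congr e₁.toEquiv, ← Nat.card_congr e₂.toEquiv,
    mul_comm]
  exact card_quotient_mul_card_quotient_dvd_card_quotient_closure_range_pair a₁ a₂

/-- For an admissible triple: if `(G₁ ⊕ ℤ^{2n₁})/⟨a¹_j⟩ ≅ G₂`,
`(G₂ ⊕ ℤ^{2n₂})/⟨a²_j⟩ ≅ G₁`, and the quotient `G` of the direct sum by the diagonal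
relations is finite, then `|G₁|·|G₂|` divides `|G|`. -/
theorem stmt_12 (G₁ G₂ : Type*) [AddCommGroup G₁] [Finite G₁] [AddCommGroup G₂] [Finite G₂]
    (n₁ n₂ : ℕ)
    (a₁ : Fin (2 * (n₁ + n₂)) → G₁ × (Fin (2 * n₁) → ℤ))
    (a₂ : Fin (2 * (n₁ + n₂)) → G₂ × (Fin (2 * n₂) → ℤ))
    (e₁ : ((G₁ × (Fin (2 * n₁) → ℤ)) ⧸ AddSubgroup.closure (Set.range a₁)) ≃+ G₂)
    (e₂ : ((G₂ × (Fin (2 * n₂) → ℤ)) ⧸ AddSubgroup.closure (Set.range a₂)) ≃+ G₁)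
    (G : Type*) [AddCommGroup G] [Finite G]
    (e : G ≃+
      ((G₁ × (Fin (2 * n₁) → ℤ)) × (G₂ × (Fin (2 * n₂) → ℤ))) ⧸
        AddSubgroup.closure (Set.range fun j => (a₁ j, a₂ j))) :
    Nat.card G₁ * Nat.card G₂ ∣ Nat.card G :=
  stmt_12_general G₁ G₂ n₁ n₂ a₁ a₂ e₁ e₂ G e
end
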